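/- arXiv:2512.10528 — 5 statements merged into one kernel-verified Lean document; each statement's English description precedes it below -/
import Mathlib

section
/- With the above setup, for every atom ζ_n of μ, the radial limit lim_{r→1} |F(rζ_n)| = +∞, and consequently lim_{r→1} G(rζ_n) = 1. In particular G(rζ) → 1 as r → 1 for μ-almost every ζ ∈ ∂B^d. -/
/-!
The atom `ζ n` contributes `ρ n (1 + r)/(1 - r)` to `Re F(r ζ n)`, while every other term of the
series has nonnegative real part because `|⟨r ζ n, ζ k⟩| ≤ r < 1`; hence `Re F(r ζ n) → ∞`.
Solving the Cayley relation gives `G - 1 = -2/(F + 1)`, so `‖G - 1‖ ≤ 2/(Re F + 1) → 0`.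
The measure is carried by its atoms, which gives the almost-everywhere statement.
-/

open MeasureTheory Filter Topology ComplexConjugate

lemma tendsto_one_add_div_one_sub_nhdsLT_one :
    Tendsto (fun r : ℝ => (1 + r) / (1 - r)) (𝓝[<] 1) atTop := by
  have hsub : Tendsto (fun r : ℝ => 1 - r) (𝓝[<] 1) (𝓝[>] 0) := by
    have h := (Filter.map_subLeft_nhdsLT (c := (1 : ℝ)) (a := 1)).le
    rwa [sub_self] at h
  have hadd : Tendsto (fun r : ℝ => 1 + r) (𝓝[<] 1) (𝓝 2) :=
    ((continuous_const.add continuous_id).tendsto' 1 2 one_add_one_eq_two).mono_left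
      nhdsWithin_le_nhds
  simpa [div_eq_mul_inv] using hadd.pos_mul_atTop two_pos (tendsto_inv_nhdsGT_zero.comp hsub)

namespace Complex

lemma re_one_add_div_one_sub_nonneg {w : ℂ} (hw : ‖w‖ < 1) : 0 ≤ ((1 + w) / (1 - w)).re := by
  have hw2 : w.re * w.re + w.im * w.im < 1 := by
    rw [← normSq_apply, normSq_eq_norm_sq]; nlinarith [norm_nonneg w]
  rw [div_re, ← add_div]
  apply div_nonneg _ (normSq_nonneg _)
  simp only [add_re, sub_re, add_im, sub_im, one_re, one_im]
  nlinarith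

lemma norm_one_add_div_one_sub_le {w : ℂ} {r : ℝ} (hw : ‖w‖ ≤ r) (hr : r < 1) :
    ‖(1 + w) / (1 - w)‖ ≤ (1 + r) / (1 - r) := by
  have hnum : ‖1 + w‖ ≤ 1 + r := (norm_add_le _ _).trans (by rw [norm_one]; linarith)
  have hden : 1 - r ≤ ‖1 - w‖ := by
    have := norm_sub_norm_le (1 : ℂ) w; rw [norm_one] at this; linarith
  rw [norm_div]
  exact div_le_div₀ (by linarith [norm_nonneg w]) hnum (by linarith) hden

lemma norm_sub_one_le_of_one_add_div_one_sub_eq {f g : ℂ} (h : (1 + g) / (1 - g) = f)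
    (hf : 0 ≤ f.re) : ‖g - 1‖ ≤ 2 / (f.re + 1) := by
  rcases eq_or_ne g 1 with rfl | hg
  · simp only [sub_self, norm_zero]; positivity
  have hf1 : f.re + 1 ≤ ‖f + 1‖ := by simpa using re_le_norm (f + 1)
  have hg' : g - 1 = -2 / (f + 1) := by
    have : f + 1 ≠ 0 := fun h0 => by
      have := congrArg re h0; simp only [add_re, one_re, zero_re] at this; linarith
    rw [eq_div_iff this, ← h]
    field_simp [sub_ne_zero.2 hg.symm]
    ring
  rw [hg', norm_div, norm_neg, norm_ofNat]
  exact div_le_div_of_nonneg_left zero_le_two (by linarith) hf1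

end Complex

lemma norm_sum_mul_conj_le_one {ι : Type*} [Fintype ι] {u v : ι → ℂ}
    (hu : ∑ j, ‖u j‖ ^ 2 = 1) (hv : ∑ j, ‖v j‖ ^ 2 = 1) :
    ‖∑ j, u j * conj (v j)‖ ≤ 1 := by
  simpa [PiLp.inner_apply, EuclideanSpace.norm_eq, hu, hv] using
    norm_inner_le_norm (𝕜 := ℂ) (WithLp.toLp 2 v) (WithLp.toLp 2 u)

lemma tendsto_one_of_cayley_of_re_tendsto_atTop {α : Type*} {l : Filter α} {f g : α → ℂ}
    (hfg : ∀ᶠ x in l, (1 + g x) / (1 - g x) = f x) (hf : Tendsto (fun x => (f x).re) l atTop) :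
    Tendsto g l (𝓝 1) := by
  rw [tendsto_iff_norm_sub_tendsto_zero]
  refine squeeze_zero' (.of_forall fun _ => norm_nonneg _) ?_
    ((tendsto_atTop_add_const_right _ 1 hf).const_div_atTop 2)
  filter_upwards [hfg, hf.eventually_ge_atTop 0] with x hx hx0
  exact Complex.norm_sub_one_le_of_one_add_div_one_sub_eq hx hx0

lemma mul_one_add_div_one_sub_le_re_tsum {ι : Type*} {ρ : ι → ℝ} (hρ : ∀ k, 0 ≤ ρ k)
    (hρs : Summable ρ) {c : ι → ℂ} (hc : ∀ k, ‖c k‖ ≤ 1) {n : ι} (hcn : c n = 1) {r : ℝ}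
    (hr0 : 0 ≤ r) (hr1 : r < 1) :
    ρ n * ((1 + r) / (1 - r)) ≤ (∑' k, (ρ k : ℂ) * ((1 + r * c k) / (1 - r * c k))).re := by
  have hrc : ∀ k, ‖(r : ℂ) * c k‖ ≤ r := fun k => by
    rw [norm_mul, Complex.norm_real, Real.norm_of_nonneg hr0]
    exact mul_le_of_le_one_right hr0 (hc k)
  have hs : Summable fun k => (ρ k : ℂ) * ((1 + r * c k) / (1 - r * c k)) := by
    refine (hρs.mul_right ((1 + r) / (1 - r))).of_norm_bounded fun k => ?_
    rw [norm_mul, Complex.norm_real, Real.norm_of_nonneg (hρ k)]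
    exact mul_le_mul_of_nonneg_left (Complex.norm_one_add_div_one_sub_le (hrc k) hr1) (hρ k)
  refine le_of_eq_of_le ?_ (le_hasSum (hs.hasSum.mapL Complex.reCLM) n fun k _ => ?_)
  · simp only [hcn, mul_one, Complex.reCLM_apply]; norm_cast
  · simpa using mul_nonneg (hρ k)
      (Complex.re_one_add_div_one_sub_nonneg ((hrc k).trans_lt hr1))

theorem stmt9_general (d : ℕ) (ρ : ℕ → ℝ) (hρ : ∀ k, 0 < ρ k) (hsum : ∑' k, ρ k = 1)
    (ζ : ℕ → Fin d → ℂ) (hζ : ∀ k, ∑ j, ‖ζ k j‖ ^ 2 = 1)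
    (F G : (Fin d → ℂ) → ℂ)
    (hF : ∀ z, F z = ∑' k, (ρ k : ℂ) *
      ((1 + ∑ j, z j * (starRingEnd ℂ) (ζ k j)) /
        (1 - ∑ j, z j * (starRingEnd ℂ) (ζ k j))))
    (hG : ∀ z, (∑ j, ‖z j‖ ^ 2 < 1) → (1 + G z) / (1 - G z) = F z) :
    (∀ n : ℕ,
      Tendsto (fun r : ℝ => ‖F (r • ζ n)‖) (nhdsWithin 1 (Set.Iio 1)) atTop ∧
      Tendsto (fun r : ℝ => G (r • ζ n)) (nhdsWithin 1 (Set.Iio 1)) (nhds 1)) ∧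
    (∀ᵐ ξ ∂(Measure.sum fun k => (ENNReal.ofReal (ρ k)) • Measure.dirac (ζ k)),
      Tendsto (fun r : ℝ => G (r • ξ)) (nhdsWithin 1 (Set.Iio 1)) (nhds 1)) := by
  have hρs : Summable ρ := by
    by_contra h
    simp [tsum_eq_zero_of_not_summable h] at hsum
  have hFre : ∀ n, Tendsto (fun r : ℝ => (F (r • ζ n)).re) (𝓝[<] 1) atTop := by
    intro n
    refine tendsto_atTop_mono' _ ?_
      (tendsto_one_add_div_one_sub_nhdsLT_one.const_mul_atTop (hρ n))
    filter_upwards [Ico_mem_nhdsLT zero_lt_one] with r hr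
    have hcn : ∑ j, ζ n j * conj (ζ n j) = 1 := by
      simpa [Complex.mul_conj'] using congrArg ((↑) : ℝ → ℂ) (hζ n)
    have hFr : F (r • ζ n) = ∑' k, (ρ k : ℂ) * ((1 + r * ∑ j, ζ n j * conj (ζ k j)) /
        (1 - r * ∑ j, ζ n j * conj (ζ k j))) := by
      simp only [hF, Pi.smul_apply, Complex.real_smul, Finset.mul_sum, mul_assoc]
    rw [hFr]
    exact mul_one_add_div_one_sub_le_re_tsum (fun k => (hρ k).le) hρs
      (fun k => norm_sum_mul_conj_le_one (hζ n) (hζ k)) hcn hr.1 hr.2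
  have hG1 : ∀ n, Tendsto (fun r : ℝ => G (r • ζ n)) (𝓝[<] 1) (𝓝 1) := by
    intro n
    refine tendsto_one_of_cayley_of_re_tendsto_atTop ?_ (hFre n)
    filter_upwards [Ioo_mem_nhdsLT (neg_lt_self one_pos)] with r hr
    refine hG _ ?_
    simp only [Pi.smul_apply, norm_smul, mul_pow, ← Finset.mul_sum, hζ n, mul_one,
      Real.norm_eq_abs, sq_abs]
    nlinarith [hr.1, hr.2]
  refine ⟨fun n => ⟨tendsto_atTop_mono (fun r => Complex.re_le_norm _) (hFre n), hG1 n⟩, ?_⟩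
  rw [Measure.ae_sum_iff]
  exact fun k => Measure.ae_smul_measure (by rw [ae_dirac_eq]; exact hG1 k) _

/-- with `μ = ∑ ρ_k δ_{ζ_k}` a discrete probability measure on `∂B^d`,
`F` its Herglotz-type transform and `G` the Cayley transform of `F`
(`(1 + G)/(1 - G) = F` on the ball), for every atom `ζ_n` of `μ` the radial limit
`lim_{r→1⁻} |F(rζ_n)| = +∞` and consequently `lim_{r→1⁻} G(rζ_n) = 1`; in particular
`G(rζ) → 1` as `r → 1⁻` for `μ`-almost every `ζ ∈ ∂B^d`. -/
theorem stmt9 (d : ℕ) (ρ : ℕ → ℝ) (hρ : ∀ k, 0 < ρ k) (hsum : ∑' k, ρ k = 1)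
    (ζ : ℕ → Fin d → ℂ) (hζ : ∀ k, ∑ j, ‖ζ k j‖ ^ 2 = 1)
    (hinj : Function.Injective ζ)
    (F G : (Fin d → ℂ) → ℂ)
    (hF : ∀ z, F z = ∑' k, (ρ k : ℂ) *
      ((1 + ∑ j, z j * (starRingEnd ℂ) (ζ k j)) /
        (1 - ∑ j, z j * (starRingEnd ℂ) (ζ k j))))
    (hG : ∀ z, (∑ j, ‖z j‖ ^ 2 < 1) → (1 + G z) / (1 - G z) = F z) :
    (∀ n : ℕ,
      Tendsto (fun r : ℝ => ‖F (r • ζ n)‖) (nhdsWithin 1 (Set.Iio 1)) atTop ∧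
      Tendsto (fun r : ℝ => G (r • ζ n)) (nhdsWithin 1 (Set.Iio 1)) (nhds 1)) ∧
    (∀ᵐ ξ ∂(Measure.sum fun k => (ENNReal.ofReal (ρ k)) • Measure.dirac (ζ k)),
      Tendsto (fun r : ℝ => G (r • ξ)) (nhdsWithin 1 (Set.Iio 1)) (nhds 1)) :=
  stmt9_general d ρ hρ hsum ζ hζ F G hF hG
end

section
/- Let μ = μ_ac + μ_s be the Lebesgue decomposition of a non-trivial probability measure on ∂B^d with μ_s discrete. Then for every z₀ ∈ B^d, the Christoffel functions agree: λ_∞(z₀; dμ) = λ_∞(z₀; dμ_ac). -/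
/-!
For `w` on the unit sphere, the peak polynomial `g_w(ζ) = (1 + ⟪w, ζ⟫) / 2` satisfies `|g_w| ≤ 1`
on the closed unit ball, with equality only at `w`. Hence, for a finite set `F` of points of the
sphere, the products `∏_{w ∈ F} (1 - g_w ^ n)` vanish on `F`, are bounded on the ball, and tend to
`1` at every other point of the ball, `z₀` included. Multiplying a competitor `q` by them and
letting `n → ∞` gives `λ_∞(z₀; dμ) ≤ ∫_{Fᶜ} |q|² dμ` by dominated convergence: finitely many atoms
on the sphere are invisible to `λ_∞`. Exhausting the countable support of `μ_s` by finite sets `F`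
makes `∫_{Fᶜ} |q|² dμ_s` tend to `0`, so `λ_∞(z₀; dμ) ≤ λ_∞(z₀; dμ_ac)`; the reverse inequality
is monotonicity of `λ_∞` in the measure.
-/

open MeasureTheory MvPolynomial

noncomputable section

open Filter Topology WithLp

section Christoffel

variable {ι : Type*}

/-- `λ_∞(z₀; dμ)`. -/
def christoffel (μ : Measure (ι → ℂ)) (z₀ : ι → ℂ) : ℝ :=
  sInf {r : ℝ | ∃ q : MvPolynomial ι ℂ, eval z₀ q = 1 ∧ r = ∫ ζ, ‖eval ζ q‖ ^ 2 ∂μ}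

variable {μ ν : Measure (ι → ℂ)} {z₀ : ι → ℂ}

theorem christoffel_le_integral {q : MvPolynomial ι ℂ} (hq : eval z₀ q = 1) :
    christoffel μ z₀ ≤ ∫ ζ, ‖eval ζ q‖ ^ 2 ∂μ :=
  csInf_le ⟨0, by rintro _ ⟨p, -, rfl⟩; positivity⟩ ⟨q, hq, rfl⟩

theorem le_christoffel {a : ℝ}
    (h : ∀ q : MvPolynomial ι ℂ, eval z₀ q = 1 → a ≤ ∫ ζ, ‖eval ζ q‖ ^ 2 ∂μ) :
    a ≤ christoffel μ z₀ :=
  le_csInf ⟨_, 1, map_one _, rfl⟩ (by rintro _ ⟨q, hq, rfl⟩; exact h q hq)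

theorem christoffel_mono (hνμ : ν ≤ μ)
    (hμ : ∀ q : MvPolynomial ι ℂ, Integrable (fun ζ => ‖eval ζ q‖ ^ 2) μ) :
    christoffel ν z₀ ≤ christoffel μ z₀ :=
  le_christoffel fun q hq => (christoffel_le_integral hq).trans <|
    integral_mono_measure hνμ (ae_of_all _ fun _ => by positivity) (hμ q)

theorem christoffel_le_of_tendsto {P : ℕ → MvPolynomial ι ℂ} {L : ℝ}
    (hz₀ : Tendsto (fun n => eval z₀ (P n)) atTop (𝓝 1))
    (hL : Tendsto (fun n => ∫ ζ, ‖eval ζ (P n)‖ ^ 2 ∂μ) atTop (𝓝 L)) :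
    christoffel μ z₀ ≤ L := by
  have hnorm : Tendsto (fun n => ‖(eval z₀ (P n))⁻¹‖ ^ 2 * ∫ ζ, ‖eval ζ (P n)‖ ^ 2 ∂μ)
      atTop (𝓝 L) := by
    simpa using ((hz₀.inv₀ one_ne_zero).norm.pow 2).mul hL
  refine ge_of_tendsto hnorm ((hz₀.eventually_ne one_ne_zero).mono fun n hn => ?_)
  calc christoffel μ z₀ ≤ ∫ ζ, ‖eval ζ (C (eval z₀ (P n))⁻¹ * P n)‖ ^ 2 ∂μ :=
        christoffel_le_integral (by simp [hn])
    _ = _ := by simp only [map_mul, eval_C, norm_mul, mul_pow, integral_const_mul]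

end Christoffel

section PeakPolynomial

variable {ι : Type*} [Fintype ι]

def peakPoly (w : ι → ℂ) : MvPolynomial ι ℂ :=
  C 2⁻¹ * (1 + ∑ j, X j * C (star (w j)))

theorem eval_peakPoly (w ζ : ι → ℂ) :
    eval ζ (peakPoly w) = 2⁻¹ * (1 + inner ℂ (toLp 2 w) (toLp 2 ζ)) := by
  simp [peakPoly, EuclideanSpace.inner_toLp_toLp, dotProduct]

variable {w ζ : ι → ℂ}

theorem eval_peakPoly_self (hw : ‖toLp 2 w‖ = 1) : eval w (peakPoly w) = 1 := by
  rw [eval_peakPoly, inner_self_eq_norm_sq_to_K, hw]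
  norm_num

theorem norm_eval_peakPoly_le (hζ : ‖toLp 2 ζ‖ ≤ 1) (hw : ‖toLp 2 w‖ = 1) :
    ‖eval ζ (peakPoly w)‖ ≤ 1 := by
  have hc : ‖inner ℂ (toLp 2 w) (toLp 2 ζ)‖ ≤ 1 :=
    (norm_inner_le_norm _ _).trans (by rw [hw, one_mul]; exact hζ)
  rw [eval_peakPoly, norm_mul]
  calc ‖(2⁻¹ : ℂ)‖ * ‖1 + inner ℂ (toLp 2 w) (toLp 2 ζ)‖ ≤ 2⁻¹ * (1 + 1) := by
        rw [norm_inv, Complex.norm_two]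
        gcongr
        exact (norm_add_le _ _).trans (by rw [norm_one]; gcongr)
    _ = 1 := by norm_num

/-- `2 re ⟪w, ζ⟫ = ‖w‖² + ‖ζ‖² - ‖w - ζ‖² < 2`, so the midpoint of `1` and `⟪w, ζ⟫` lies in the
open unit disc. -/
theorem norm_eval_peakPoly_lt (hζ : ‖toLp 2 ζ‖ ≤ 1) (hw : ‖toLp 2 w‖ = 1) (hne : ζ ≠ w) :
    ‖eval ζ (peakPoly w)‖ < 1 := by
  set c := inner ℂ (toLp 2 w) (toLp 2 ζ)
  have hc : ‖c‖ ≤ 1 := (norm_inner_le_norm _ _).trans (by rw [hw, one_mul]; exact hζ)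
  have hre : 2 * RCLike.re c < 2 := by
    have hsub := norm_sub_sq (𝕜 := ℂ) (toLp 2 w) (toLp 2 ζ)
    have hpos : 0 < ‖toLp 2 w - toLp 2 ζ‖ := by
      rw [norm_pos_iff, sub_ne_zero]
      exact fun h => hne (toLp_injective 2 h).symm
    rw [hw] at hsub
    nlinarith [norm_nonneg (toLp 2 ζ)]
  have hsq : ‖1 + c‖ ^ 2 < 2 ^ 2 := by
    have := norm_add_sq (𝕜 := ℂ) (1 : ℂ) c
    simp only [RCLike.inner_apply, map_one, mul_one, one_pow, norm_one] at this
    nlinarith [norm_nonneg c]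
  rw [eval_peakPoly, norm_mul, norm_inv, Complex.norm_two]
  nlinarith [abs_lt_of_sq_lt_sq' hsq zero_le_two, norm_nonneg (1 + c)]

end PeakPolynomial

section Cutoff

variable {ι : Type*} [Fintype ι]

def cutoffPoly (F : Finset (ι → ℂ)) (n : ℕ) : MvPolynomial ι ℂ :=
  ∏ w ∈ F, (1 - peakPoly w ^ n)

variable {F : Finset (ι → ℂ)} {ζ : ι → ℂ}

theorem eval_cutoffPoly (n : ℕ) :
    eval ζ (cutoffPoly F n) = ∏ w ∈ F, (1 - eval ζ (peakPoly w) ^ n) := by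
  simp [cutoffPoly]

theorem norm_eval_cutoffPoly_le (hF : ∀ w ∈ F, ‖toLp 2 w‖ = 1) (hζ : ‖toLp 2 ζ‖ ≤ 1) (n : ℕ) :
    ‖eval ζ (cutoffPoly F n)‖ ≤ 2 ^ F.card := by
  rw [eval_cutoffPoly, norm_prod, ← Finset.prod_const]
  refine Finset.prod_le_prod (fun _ _ => norm_nonneg _) fun w hw => ?_
  calc ‖1 - eval ζ (peakPoly w) ^ n‖ ≤ 1 + ‖eval ζ (peakPoly w)‖ ^ n := by
        simpa using norm_sub_le (1 : ℂ) (eval ζ (peakPoly w) ^ n)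
    _ ≤ 2 := by
        have := pow_le_one₀ (norm_nonneg _) (norm_eval_peakPoly_le hζ (hF w hw)) (n := n)
        linarith

theorem tendsto_eval_cutoffPoly (hF : ∀ w ∈ F, ‖toLp 2 w‖ = 1) (hζ : ‖toLp 2 ζ‖ ≤ 1) :
    Tendsto (fun n => eval ζ (cutoffPoly F n)) atTop (𝓝 ((↑F : Set (ι → ℂ))ᶜ.indicator 1 ζ)) := by
  by_cases hζF : ζ ∈ F
  · have hzero (n : ℕ) : eval ζ (cutoffPoly F n) = 0 := by
      rw [eval_cutoffPoly]
      exact Finset.prod_eq_zero hζF (by rw [eval_peakPoly_self (hF ζ hζF), one_pow, sub_self])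
    simp [hzero, hζF]
  · have hfactor : ∀ w ∈ F, Tendsto (fun n => 1 - eval ζ (peakPoly w) ^ n) atTop (𝓝 1) :=
      fun w hw => by
        simpa using tendsto_const_nhds.sub (tendsto_pow_atTop_nhds_zero_of_norm_lt_one
          (norm_eval_peakPoly_lt hζ (hF w hw) fun h => hζF (h ▸ hw)))
    simpa [eval_cutoffPoly, hζF] using tendsto_finsetProd F hfactor

end Cutoff

section Integrals

variable {ι : Type*} [Fintype ι] {μ : Measure (ι → ℂ)}

theorem exists_norm_eval_le_of_norm_le_one (p : MvPolynomial ι ℂ) :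
    ∃ M, ∀ ζ : ι → ℂ, ‖toLp 2 ζ‖ ≤ 1 → ‖eval ζ p‖ ≤ M := by
  obtain ⟨M, hM⟩ := ((isCompact_closedBall (0 : EuclideanSpace ℂ ι) 1).image
    (PiLp.continuous_ofLp 2 _)).exists_bound_of_continuousOn (continuous_eval p).continuousOn
  exact ⟨M, fun ζ hζ => hM ζ ⟨toLp 2 ζ, by simpa using hζ, rfl⟩⟩

theorem integrable_norm_eval_sq [IsFiniteMeasure μ] (hμ : ∀ᵐ ζ ∂μ, ‖toLp 2 ζ‖ ≤ 1)
    (p : MvPolynomial ι ℂ) : Integrable (fun ζ => ‖eval ζ p‖ ^ 2) μ := by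
  obtain ⟨M, hM⟩ := exists_norm_eval_le_of_norm_le_one p
  refine .of_bound ((continuous_eval p).norm.pow 2).aestronglyMeasurable (M ^ 2) ?_
  filter_upwards [hμ] with ζ hζ
  simpa using pow_le_pow_left₀ (norm_nonneg _) (hM ζ hζ) 2

theorem tendsto_integral_norm_eval_mul_cutoffPoly_sq [IsFiniteMeasure μ]
    (hμ : ∀ᵐ ζ ∂μ, ‖toLp 2 ζ‖ ≤ 1) {F : Finset (ι → ℂ)} (hF : ∀ w ∈ F, ‖toLp 2 w‖ = 1)
    (q : MvPolynomial ι ℂ) :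
    Tendsto (fun n => ∫ ζ, ‖eval ζ (q * cutoffPoly F n)‖ ^ 2 ∂μ) atTop
      (𝓝 (∫ ζ in (↑F)ᶜ, ‖eval ζ q‖ ^ 2 ∂μ)) := by
  obtain ⟨M, hM⟩ := exists_norm_eval_le_of_norm_le_one q
  rw [← integral_indicator F.measurableSet.compl]
  refine tendsto_integral_of_dominated_convergence (fun _ => (M * 2 ^ F.card) ^ 2)
    (fun n => ((continuous_eval _).norm.pow 2).aestronglyMeasurable) (integrable_const _)
    (fun n => ?_) ?_
  · filter_upwards [hμ] with ζ hζ
    rw [map_mul, norm_pow, norm_norm, norm_mul]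
    gcongr
    · exact (norm_nonneg _).trans (hM ζ hζ)
    · exact hM ζ hζ
    · exact norm_eval_cutoffPoly_le hF hζ n
  · filter_upwards [hμ] with ζ hζ
    have hlim := ((tendsto_eval_cutoffPoly hF hζ).const_mul (eval ζ q)).norm.pow 2
    by_cases hζF : ζ ∈ F <;> simpa [hζF] using hlim

end Integrals

theorem Set.Countable.exists_monotone_finset_iUnion_eq {α : Type*} {t : Set α}
    (ht : t.Countable) : ∃ F : ℕ → Finset α, Monotone F ∧ ⋃ n, (F n : Set α) = t := by
  classical
  rcases t.eq_empty_or_nonempty with rfl | hne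
  · exact ⟨fun _ => ∅, monotone_const, by simp⟩
  obtain ⟨e, rfl⟩ := ht.exists_eq_range hne
  refine ⟨fun n => (Finset.range n).image e,
    fun m n hmn => Finset.image_subset_image (Finset.range_subset_range.2 hmn), ?_⟩
  ext x
  simp only [Set.mem_iUnion, Finset.coe_image, Finset.coe_range, Set.mem_image, Set.mem_Iio,
    Set.mem_range]
  exact ⟨fun ⟨_, k, _, hk⟩ => ⟨k, hk⟩, fun ⟨k, hk⟩ => ⟨k + 1, k, k.lt_succ_self, hk⟩⟩

theorem tendsto_setIntegral_compl_finset {α : Type*} [MeasurableSpace α]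
    [MeasurableSingletonClass α] {ν : Measure α} {f : α → ℝ} (hf : Integrable f ν)
    {F : ℕ → Finset α} (hF : Monotone F) (hνF : ν (⋃ n, (F n : Set α))ᶜ = 0) :
    Tendsto (fun n => ∫ x in (F n : Set α)ᶜ, f x ∂ν) atTop (𝓝 0) := by
  have := tendsto_setIntegral_of_antitone (fun n => (F n).measurableSet.compl)
    (fun m n hmn => Set.compl_subset_compl.2 (Finset.coe_subset.2 (hF hmn))) ⟨0, hf.integrableOn⟩
  rwa [← Set.compl_iUnion, setIntegral_measure_zero _ hνF] at this

section Atoms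

variable {ι : Type*} [Fintype ι] {μ ν : Measure (ι → ℂ)} {z₀ : ι → ℂ}

theorem christoffel_le_setIntegral_compl [IsFiniteMeasure μ] (hμ : ∀ᵐ ζ ∂μ, ‖toLp 2 ζ‖ ≤ 1)
    (hz₀ : ‖toLp 2 z₀‖ < 1) {F : Finset (ι → ℂ)} (hF : ∀ w ∈ F, ‖toLp 2 w‖ = 1)
    {q : MvPolynomial ι ℂ} (hq : eval z₀ q = 1) :
    christoffel μ z₀ ≤ ∫ ζ in (↑F)ᶜ, ‖eval ζ q‖ ^ 2 ∂μ := by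
  have hz₀F : z₀ ∉ F := fun h => (hF z₀ h).not_lt hz₀
  refine christoffel_le_of_tendsto (P := fun n => q * cutoffPoly F n) ?_
    (tendsto_integral_norm_eval_mul_cutoffPoly_sq hμ hF q)
  simpa [hq, hz₀F] using tendsto_eval_cutoffPoly hF hz₀.le

theorem christoffel_add_le [IsFiniteMeasure μ] [IsFiniteMeasure ν]
    (hμ : ∀ᵐ ζ ∂μ, ‖toLp 2 ζ‖ ≤ 1) (hν : ∀ᵐ ζ ∂ν, ‖toLp 2 ζ‖ = 1) {t : Set (ι → ℂ)}
    (ht : t.Countable) (hνt : ν tᶜ = 0) (hz₀ : ‖toLp 2 z₀‖ < 1) :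
    christoffel (μ + ν) z₀ ≤ christoffel μ z₀ := by
  refine le_christoffel fun q hq => ?_
  have hts : (t ∩ {ζ | ‖toLp 2 ζ‖ = 1}).Countable := ht.mono Set.inter_subset_left
  obtain ⟨F, hFmono, hFt⟩ := hts.exists_monotone_finset_iUnion_eq
  have hFsph (n : ℕ) : ∀ w ∈ F n, ‖toLp 2 w‖ = 1 := fun w hw =>
    (hFt.subset (Set.mem_iUnion_of_mem n hw)).2
  have hνF : ν (⋃ n, (F n : Set (ι → ℂ)))ᶜ = 0 := by
    rw [hFt, Set.compl_inter]
    exact measure_union_null hνt hν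
  have hμint := integrable_norm_eval_sq hμ q
  have hνint := integrable_norm_eval_sq (hν.mono fun _ h => h.le) q
  have hμν : ∀ᵐ ζ ∂(μ + ν), ‖toLp 2 ζ‖ ≤ 1 :=
    ae_add_measure_iff.2 ⟨hμ, hν.mono fun _ h => h.le⟩
  have htail := tendsto_setIntegral_compl_finset hνint hFmono hνF
  refine ge_of_tendsto' (by simpa using tendsto_const_nhds.add htail) fun n => ?_
  calc christoffel (μ + ν) z₀ ≤ ∫ ζ in (F n : Set (ι → ℂ))ᶜ, ‖eval ζ q‖ ^ 2 ∂(μ + ν) :=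
        christoffel_le_setIntegral_compl hμν hz₀ (hFsph n) hq
    _ = ∫ ζ in (F n : Set (ι → ℂ))ᶜ, ‖eval ζ q‖ ^ 2 ∂μ
          + ∫ ζ in (F n : Set (ι → ℂ))ᶜ, ‖eval ζ q‖ ^ 2 ∂ν := by
        rw [Measure.restrict_add, integral_add_measure hμint.restrict hνint.restrict]
    _ ≤ ∫ ζ, ‖eval ζ q‖ ^ 2 ∂μ + ∫ ζ in (F n : Set (ι → ℂ))ᶜ, ‖eval ζ q‖ ^ 2 ∂ν := by
        gcongr ?_ + _
        exact setIntegral_le_integral hμint (ae_of_all _ fun _ => by positivity)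

end Atoms

theorem stmt10_general (d : ℕ) (μ μac μs : Measure (Fin d → ℂ))
    [IsProbabilityMeasure μ]
    (hsphμ : ∀ᵐ ζ ∂μ, ∑ j, ‖ζ j‖ ^ 2 = 1)
    (hdecomp : μ = μac + μs)
    (hdisc : ∃ s : Set (Fin d → ℂ), s.Countable ∧ μs sᶜ = 0)
    (z₀ : Fin d → ℂ) (hz₀ : ∑ j, ‖z₀ j‖ ^ 2 < 1) :
    sInf {r : ℝ | ∃ q : MvPolynomial (Fin d) ℂ,
        eval z₀ q = 1 ∧ r = ∫ ζ, ‖eval ζ q‖ ^ 2 ∂μ}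
    = sInf {r : ℝ | ∃ q : MvPolynomial (Fin d) ℂ,
        eval z₀ q = 1 ∧ r = ∫ ζ, ‖eval ζ q‖ ^ 2 ∂μac} := by
  obtain ⟨s, hs, hμs⟩ := hdisc
  have hsph : ∀ᵐ ζ ∂μ, ‖toLp 2 ζ‖ = 1 := hsphμ.mono fun ζ hζ => by
    rwa [← pow_eq_one_iff_of_nonneg (norm_nonneg _) two_ne_zero, EuclideanSpace.norm_sq_eq]
  have hball : ∀ᵐ ζ ∂μ, ‖toLp 2 ζ‖ ≤ 1 := hsph.mono fun _ h => h.le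
  have hz₀' : ‖toLp 2 z₀‖ < 1 := by
    rwa [← pow_lt_one_iff_of_nonneg (norm_nonneg _) two_ne_zero, EuclideanSpace.norm_sq_eq]
  have hac_le : μac ≤ μ := hdecomp ▸ Measure.le_add_right le_rfl
  have hs_le : μs ≤ μ := hdecomp ▸ Measure.le_add_left le_rfl
  have := isFiniteMeasure_of_le μ hac_le
  have := isFiniteMeasure_of_le μ hs_le
  change christoffel μ z₀ = christoffel μac z₀
  refine le_antisymm ?_ (christoffel_mono hac_le (integrable_norm_eval_sq hball))
  rw [hdecomp]
  exact christoffel_add_le (hball.filter_mono (ae_mono hac_le))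
    (hsph.filter_mono (ae_mono hs_le)) hs hμs hz₀'

/-- if `μ = μ_ac + μ_s` is the Lebesgue decomposition of a non-trivial
probability measure on the unit sphere `∂B^d` (with respect to the rotation-invariant
measure σ), and the singular part `μ_s` is discrete, then for every `z₀` in the open unit
ball the Christoffel functions of `μ` and of `μ_ac` agree:
`λ_∞(z₀; dμ) = λ_∞(z₀; dμ_ac)`. -/
theorem stmt10 (d : ℕ) (μ μac μs σ' : Measure (Fin d → ℂ))
    [IsProbabilityMeasure μ] [IsProbabilityMeasure σ']
    (hsphμ : ∀ᵐ ζ ∂μ, ∑ j, ‖ζ j‖ ^ 2 = 1)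
    (hsphσ : ∀ᵐ ζ ∂σ', ∑ j, ‖ζ j‖ ^ 2 = 1)
    (hrot : ∀ U : Matrix.unitaryGroup (Fin d) ℂ,
      Measure.map (fun ζ => Matrix.mulVec (U : Matrix (Fin d) (Fin d) ℂ) ζ) σ' = σ')
    (hnt : ∀ q : MvPolynomial (Fin d) ℂ, q ≠ 0 → 0 < ∫ ζ, ‖eval ζ q‖ ^ 2 ∂μ)
    (hdecomp : μ = μac + μs)
    (hac : μac ≪ σ')
    (hdisc : ∃ s : Set (Fin d → ℂ), s.Countable ∧ μs sᶜ = 0)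
    (z₀ : Fin d → ℂ) (hz₀ : ∑ j, ‖z₀ j‖ ^ 2 < 1) :
    sInf {r : ℝ | ∃ q : MvPolynomial (Fin d) ℂ,
        eval z₀ q = 1 ∧ r = ∫ ζ, ‖eval ζ q‖ ^ 2 ∂μ}
    = sInf {r : ℝ | ∃ q : MvPolynomial (Fin d) ℂ,
        eval z₀ q = 1 ∧ r = ∫ ζ, ‖eval ζ q‖ ^ 2 ∂μac} :=
  stmt10_general d μ μac μs hsphμ hdecomp hdisc z₀ hz₀

end
end

section
/- Let μ be a non-trivial probability measure on ∂B^d with Verblunsky coefficients (γ_{α,β}) and sharp polynomials (φ_α^#) satisfying the Szegő-type recurrence φ_α^#(z) = -(conj(γ_{0,α})/d_{0,α})·S_α(z) + (1/d_{0,α})·φ_{prec(α)}^#(z), where S_α has zero constant term, d_{0,α} = √(1-|γ_{0,α}|²), and φ_0^# = 1. Then for every α ∈ ℕ₀^d, φ_α^#(0) = Π_{0⪯β⪯α} d_{0,β}^{-1}, and hence |φ_α^#(0)|^{-2} = Π_{0⪯β⪯α} (1 - |γ_{0,β}|²). -/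
open MvPolynomial

noncomputable section

/-- values at the origin of the sharp polynomials. With multi-indices
enumerated in shortlex order (so families are indexed by `ℕ`), let `γ n = γ_{0,α}` be the
Verblunsky coefficients (`|γ n| < 1`, `γ 0 = 0`), `d_{0,α} = √(1-|γ n|²)`, and suppose the
sharp polynomials satisfy `φ_0^# = 1` and the Szegő-type recurrence
`φ_α^# = -(conj γ_{0,α}/d_{0,α})·S_α + (1/d_{0,α})·φ_{prec α}^#` with `S_α` having zero
constant term. Then `φ_α^#(0) = ∏_{β ⪯ α} d_{0,β}⁻¹`, hence
`|φ_α^#(0)|⁻² = ∏_{β ⪯ α} (1-|γ_{0,β}|²)`. -/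
theorem stmt14 (d : ℕ)
    (γ : ℕ → ℂ) (hγ : ∀ n, ‖γ n‖ < 1) (hγ0 : γ 0 = 0)
    (S φs : ℕ → MvPolynomial (Fin d) ℂ)
    (hS : ∀ n, (S n).coeff 0 = 0)
    (hφs0 : φs 0 = 1)
    (hrec : ∀ n : ℕ, φs (n + 1) =
      (-((starRingEnd ℂ) (γ (n + 1)) / ((Real.sqrt (1 - ‖γ (n + 1)‖ ^ 2) : ℝ) : ℂ))) • S (n + 1)
      + (((Real.sqrt (1 - ‖γ (n + 1)‖ ^ 2) : ℝ) : ℂ))⁻¹ • φs n)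
    (n : ℕ) :
    eval 0 (φs n) = ∏ k ∈ Finset.range (n + 1), (((Real.sqrt (1 - ‖γ k‖ ^ 2) : ℝ) : ℂ))⁻¹ ∧
    (‖eval (0 : Fin d → ℂ) (φs n)‖ ^ 2)⁻¹ = ∏ k ∈ Finset.range (n + 1), (1 - ‖γ k‖ ^ 2) := by
  have hpos : ∀ k, (0:ℝ) < 1 - ‖γ k‖ ^ 2 := by
    intro k
    have h1 := hγ k
    have h0 := norm_nonneg (γ k)
    nlinarith
  have heval : ∀ m, eval (0 : Fin d → ℂ) (φs m)
      = ∏ k ∈ Finset.range (m + 1), (((Real.sqrt (1 - ‖γ k‖ ^ 2) : ℝ) : ℂ))⁻¹ := by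
    intro m
    induction m with
    | zero =>
      simp [hφs0, hγ0]
    | succ m ih =>
      have hSe : eval (0 : Fin d → ℂ) (S (m+1)) = 0 := by
        have := hS (m+1)
        simp only [show (eval (0 : Fin d → ℂ)) = constantCoeff from eval_zero]
        simpa [constantCoeff_eq] using this
      rw [hrec m]
      simp only [map_add, smul_eval, hSe, ih, mul_zero, add_zero, zero_add,
        Finset.prod_range_succ]
      ring
  refine ⟨heval n, ?_⟩
  rw [heval n, norm_prod, ← Finset.prod_pow, ← Finset.prod_inv_distrib]
  apply Finset.prod_congr rfl
  intro k _
  rw [norm_inv, Complex.norm_real, Real.norm_eq_abs,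
    abs_of_nonneg (Real.sqrt_nonneg _), inv_pow, inv_inv,
    Real.sq_sqrt (le_of_lt (hpos k))]


end
end

section
/- In the same setting, using additionally the recurrence φ_α(z) = (1/d_{0,α})·S_α(z) - (γ_{0,α}/d_{0,α})·φ_{prec(α)}^#(z) with S_α(0) = 0, one has φ_α(0) = -γ_{0,α}·Π_{0⪯β⪯α} d_{0,β}^{-1}, and for every α ∈ ℕ₀^d: Σ_{0⪯β⪯α} |φ_β(0)|² = Π_{0⪯β⪯α} (1 - |γ_{0,β}|²)^{-1}. -/
/-!
At the origin the recurrence loses its `S_α` term, so `φ_α(0)` is `-γ_{0,α}/d_{0,α}` times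
`φ_{prec α}^#(0) = ∏_{β ≺ α} d_{0,β}⁻¹`. Hence `|φ_α(0)|² = g_α · P_α` with `g_β = |γ_{0,β}|²` and
`P_α = ∏_{β ⪯ α} (1 - g_β)⁻¹`, and the partial sums telescope because
`P_α - P_{prec α} = g_α · P_α`, i.e. `g/(1-g) + 1 = 1/(1-g)`.
-/

open MvPolynomial

theorem Finset.prod_range_succ_inv_one_sub_sub {K : Type*} [Field K] (g : ℕ → K) {n : ℕ}
    (hn : 1 - g n ≠ 0) :
    ∏ k ∈ range (n + 1), (1 - g k)⁻¹ - ∏ k ∈ range n, (1 - g k)⁻¹ =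
      g n * ∏ k ∈ range (n + 1), (1 - g k)⁻¹ := by
  rw [prod_range_succ]
  field_simp
  ring

theorem Finset.sum_range_succ_eq_prod_inv_one_sub {K : Type*} [Field K] (g x : ℕ → K)
    (hg : ∀ k, 1 - g k ≠ 0) (hx₀ : x 0 = (1 - g 0)⁻¹)
    (hx : ∀ k, x (k + 1) = g (k + 1) * ∏ j ∈ range (k + 2), (1 - g j)⁻¹) (n : ℕ) :
    ∑ k ∈ range (n + 1), x k = ∏ k ∈ range (n + 1), (1 - g k)⁻¹ := by
  induction n with
  | zero => simp [hx₀]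
  | succ n ih =>
    rw [sum_range_succ, ih, hx, ← prod_range_succ_inv_one_sub_sub g (hg (n + 1)),
      add_sub_cancel]

theorem norm_prod_inv_sqrt_sq {ι : Type*} (s : Finset ι) {f : ι → ℝ} (hf : ∀ i, 0 ≤ f i) :
    ‖∏ i ∈ s, ((√(f i) : ℝ) : ℂ)⁻¹‖ ^ 2 = ∏ i ∈ s, (f i)⁻¹ := by
  rw [norm_prod, ← Finset.prod_pow]
  refine Finset.prod_congr rfl fun i _ => ?_
  rw [norm_inv, Complex.norm_real, Real.norm_of_nonneg (Real.sqrt_nonneg _), inv_pow,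
    Real.sq_sqrt (hf i)]

/-- values at the origin of the orthonormal polynomials. In the setting of
the previous statement (shortlex enumeration by `ℕ`, Verblunsky coefficients `γ n` with
`|γ n| < 1`, `γ 0 = 0`, `d_{0,α} = √(1-|γ n|²)`, sharp polynomials with
`φ_α^#(0) = ∏_{β ⪯ α} d_{0,β}⁻¹`), if the orthonormal polynomials satisfy `φ_0 = 1` and
the recurrence `φ_α = (1/d_{0,α})·S_α - (γ_{0,α}/d_{0,α})·φ_{prec α}^#` with `S_α(0) = 0`,
then `φ_α(0) = -γ_{0,α}·∏_{β ⪯ α} d_{0,β}⁻¹` (for `α ≻ 0`) and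
`∑_{β ⪯ α} |φ_β(0)|² = ∏_{β ⪯ α} (1-|γ_{0,β}|²)⁻¹`. -/
theorem stmt15 (d : ℕ)
    (γ : ℕ → ℂ) (hγ : ∀ n, ‖γ n‖ < 1) (hγ0 : γ 0 = 0)
    (S φs φ : ℕ → MvPolynomial (Fin d) ℂ)
    (hS : ∀ n, (S n).coeff 0 = 0)
    (hφs : ∀ n : ℕ, eval 0 (φs n)
      = ∏ k ∈ Finset.range (n + 1), (((Real.sqrt (1 - ‖γ k‖ ^ 2) : ℝ) : ℂ))⁻¹)
    (hφ0 : φ 0 = 1)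
    (hrec : ∀ n : ℕ, φ (n + 1) =
      (((Real.sqrt (1 - ‖γ (n + 1)‖ ^ 2) : ℝ) : ℂ))⁻¹ • S (n + 1)
      - (γ (n + 1) / ((Real.sqrt (1 - ‖γ (n + 1)‖ ^ 2) : ℝ) : ℂ)) • φs n) :
    (∀ n : ℕ, eval 0 (φ (n + 1)) =
      -γ (n + 1) * ∏ k ∈ Finset.range (n + 2), (((Real.sqrt (1 - ‖γ k‖ ^ 2) : ℝ) : ℂ))⁻¹) ∧
    (∀ n : ℕ, ∑ k ∈ Finset.range (n + 1), ‖eval (0 : Fin d → ℂ) (φ k)‖ ^ 2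
      = ∏ k ∈ Finset.range (n + 1), (1 - ‖γ k‖ ^ 2)⁻¹) := by
  have hpos (k : ℕ) : 0 < 1 - ‖γ k‖ ^ 2 :=
    sub_pos.2 (pow_lt_one₀ (norm_nonneg _) (hγ k) two_ne_zero)
  have hφ_zero (n : ℕ) : eval 0 (φ (n + 1)) =
      -γ (n + 1) * ∏ k ∈ Finset.range (n + 2), (((Real.sqrt (1 - ‖γ k‖ ^ 2) : ℝ) : ℂ))⁻¹ := by
    have hS_zero : eval 0 (S (n + 1)) = 0 := by rw [eval_zero, constantCoeff_eq, hS]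
    rw [hrec, map_sub, smul_eval, smul_eval, hS_zero, hφs, Finset.prod_range_succ _ (n + 1)]
    ring
  refine ⟨hφ_zero, Finset.sum_range_succ_eq_prod_inv_one_sub _ _ (fun k => (hpos k).ne')
    (by simp [hφ0, hγ0]) fun k => ?_⟩
  rw [hφ_zero, norm_mul, norm_neg, mul_pow, norm_prod_inv_sqrt_sq _ fun j => (hpos j).le]
end

section
/- Let dμ(ζ) = 2|ζ₁|² dσ(ζ) on ∂B². Then the moment kernel K(α,β) = ∫ ζ^α conj(ζ)^β dμ is diagonal (K(α,β) = 0 for α ≠ β), all Verblunsky coefficients γ_{0,α} of μ vanish, and hence Π_{α∈ℕ₀²}(1-|γ_{0,α}|²) = 1 ≠ 2/e = exp(∫_{∂B²} log(2|ζ₁|²) dσ(ζ)). Thus the Szegő–Verblunsky identity fails for this measure. -/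
open MeasureTheory Filter

noncomputable section

/-- The length (weight) of a multi-index. -/
def mwt {d : ℕ} (α : Fin d →₀ ℕ) : ℕ := ∑ j, α j

/-- Strict short lexicographic (shortlex) order on multi-indices, with ties broken so that
`e₁ ≺ e₂ ≺ ⋯ ≺ e_d` (at the first index where they differ, the larger entry comes first). -/
def slexLT {d : ℕ} (α β : Fin d →₀ ℕ) : Prop :=
  mwt α < mwt β ∨ (mwt α = mwt β ∧ ∃ i, (∀ j, j < i → α j = β j) ∧ β i < α i)

/-- Non-strict shortlex order. -/
def slexLE {d : ℕ} (α β : Fin d →₀ ℕ) : Prop := α = β ∨ slexLT α β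

/-!
Off-diagonal moments vanish because `σ` is invariant under the diagonal unitaries, which multiply
`ζ^α ζ̄^β` by a character that is nontrivial when `α ≠ β`. Hence `K` is diagonal with positive
diagonal, the moment determinants are products of diagonal entries, and the determinant identity
forces `∏ (1 - |γ|²) = 1` with every factor in `[0, 1]`: every `γ` vanishes.

For the Szegő side, `θ ↦ ∫ g (rot θ *ᵥ ζ) dσ` is constant for `g ζ = ζ₀^(n+1) ζ̄₀^n ζ̄₁`; its
derivative at `θ = 0` is `(n + 1) ∫ |ζ₀|^(2n) |ζ₁|² - ∫ |ζ₀|^(2n+2)` plus an off-diagonal moment.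
With `|ζ₁|² = 1 - |ζ₀|²` this gives `(n + 2) m (n + 1) = (n + 1) m n` for the moments `m n` of
`|ζ₀|²`, so `m n = 1 / (n + 1)`. A measure on `[0, 1]` is determined by its moments (Weierstrass),
so `|ζ₀|²` is uniformly distributed on `[0, 1]` and
`∫ log (2 |ζ₀|²) dσ = ∫₀¹ log (2 t) dt = log 2 - 1`.
-/

open scoped ComplexConjugate Matrix BoundedContinuousFunction

section Torus

variable {ι : Type*} [Fintype ι] [DecidableEq ι]

theorem Matrix.diagonal_mem_unitaryGroup {u : ι → ℂ} (hu : ∀ i, ‖u i‖ = 1) :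
    Matrix.diagonal u ∈ Matrix.unitaryGroup ι ℂ := by
  rw [Matrix.mem_unitaryGroup_iff, Matrix.star_eq_conjTranspose, Matrix.diagonal_conjTranspose,
    Matrix.diagonal_mul_diagonal, ← Matrix.diagonal_one]
  congr 1
  funext i
  simp [Complex.mul_conj', hu i]

def IsUnitarilyInvariant (σ : Measure (ι → ℂ)) : Prop :=
  ∀ U : Matrix.unitaryGroup ι ℂ, σ.map (fun ζ => (U : Matrix ι ι ℂ) *ᵥ ζ) = σ

theorem IsUnitarilyInvariant.map_mul_eq {σ : Measure (ι → ℂ)} (hσ : IsUnitarilyInvariant σ)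
    {u : ι → ℂ} (hu : ∀ i, ‖u i‖ = 1) : σ.map (fun ζ => u * ζ) = σ := by
  have h := hσ ⟨_, Matrix.diagonal_mem_unitaryGroup hu⟩
  have hmul : (fun ζ => Matrix.diagonal u *ᵥ ζ) = fun ζ => u * ζ :=
    funext fun ζ => funext (Matrix.mulVec_diagonal u ζ)
  rwa [hmul] at h

theorem IsUnitarilyInvariant.integral_comp {E : Type*} [NormedAddCommGroup E] [NormedSpace ℝ E]
    {σ : Measure (ι → ℂ)} (hσ : IsUnitarilyInvariant σ)
    (U : Matrix.unitaryGroup ι ℂ) {f : (ι → ℂ) → E} (hf : AEStronglyMeasurable f σ) :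
    ∫ ζ, f ((U : Matrix ι ι ℂ) *ᵥ ζ) ∂σ = ∫ ζ, f ζ ∂σ := by
  conv_rhs => rw [← hσ U]
  exact (integral_map (by fun_prop) ((hσ U).symm ▸ hf)).symm

theorem exists_norm_eq_one_pow_mul_conj_pow_eq_neg_one {a b : ℕ} (hab : a ≠ b) :
    ∃ u : ℂ, ‖u‖ = 1 ∧ u ^ a * conj u ^ b = -1 := by
  have hab' : (a : ℂ) - b ≠ 0 := sub_ne_zero.mpr (Nat.cast_injective.ne hab)
  refine ⟨Complex.exp ((Real.pi / (a - b) : ℝ) * Complex.I), Complex.norm_exp_ofReal_mul_I _, ?_⟩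
  rw [← Complex.exp_conj, ← Complex.exp_nat_mul, ← Complex.exp_nat_mul, ← Complex.exp_add]
  convert Complex.exp_pi_mul_I using 2
  simp only [map_mul, Complex.conj_ofReal, Complex.conj_I]
  push_cast
  field_simp
  ring

theorem integral_eq_zero_of_map_eq_of_comp_eq_neg {X E : Type*} [MeasurableSpace X]
    [NormedAddCommGroup E] [NormedSpace ℝ E] {σ : Measure X} {T : X → X} (hT : Measurable T)
    (hσ : σ.map T = σ) {f : X → E} (hf : AEStronglyMeasurable f σ) (hfT : ∀ x, f (T x) = -f x) :
    ∫ x, f x ∂σ = 0 := by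
  have h : ∫ x, f x ∂σ = ∫ x, f (T x) ∂σ := by
    conv_lhs => rw [← hσ]
    exact integral_map hT.aemeasurable (hσ.symm ▸ hf)
  rw [funext hfT, integral_neg] at h
  have h2 : (2 : ℝ) • ∫ x, f x ∂σ = 0 := by
    rw [two_smul]
    nth_rewrite 1 [h]
    exact neg_add_cancel _
  exact (smul_eq_zero.mp h2).resolve_left two_ne_zero

theorem integral_monomial_mul_conj_monomial_eq_zero {σ : Measure (ι → ℂ)}
    (hσ : ∀ u : ι → ℂ, (∀ i, ‖u i‖ = 1) → σ.map (fun ζ => u * ζ) = σ)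
    {α β : ι → ℕ} (hαβ : α ≠ β) :
    ∫ ζ, (∏ i, ζ i ^ α i) * conj (∏ i, ζ i ^ β i) ∂σ = 0 := by
  obtain ⟨i, hi⟩ := Function.ne_iff.mp hαβ
  obtain ⟨c, hc, hci⟩ := exists_norm_eq_one_pow_mul_conj_pow_eq_neg_one hi
  set u : ι → ℂ := Function.update 1 i c
  have hu : ∀ j, ‖u j‖ = 1 := by
    intro j
    rcases eq_or_ne j i with rfl | hj
    · simpa [u] using hc
    · simp [u, hj]
  have hprod : ∀ γ : ι → ℕ, ∏ j, u j ^ γ j = c ^ γ i :=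
    fun γ => (Fintype.prod_eq_single i fun j hj => by simp [u, hj]).trans (by simp [u])
  refine integral_eq_zero_of_map_eq_of_comp_eq_neg (by fun_prop) (hσ u hu)
    (by fun_prop) fun ζ => ?_
  simp only [Pi.mul_apply, mul_pow, Finset.prod_mul_distrib, hprod, map_mul, map_pow]
  linear_combination (∏ j, ζ j ^ α j) * conj (∏ j, ζ j ^ β j) * hci

end Torus

section Compact

variable {X : Type*} [TopologicalSpace X] [T2Space X] [MeasurableSpace X] [OpensMeasurableSpace X]
  {σ : Measure X} [IsFiniteMeasure σ] {K : Set X}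

theorem Continuous.integrable_of_ae_mem_compact {E : Type*} [NormedAddCommGroup E]
    (hK : IsCompact K) (hσK : ∀ᵐ x ∂σ, x ∈ K) {f : X → E} (hf : Continuous f) :
    Integrable f σ := by
  rw [← Measure.restrict_eq_self_of_ae_mem hσK]
  exact hf.continuousOn.integrableOn_compact hK

theorem hasDerivAt_integral_of_ae_mem_compact (hK : IsCompact K) (hσK : ∀ᵐ x ∂σ, x ∈ K)
    {F F' : ℝ → X → ℂ} (hF : Continuous F.uncurry) (hF' : Continuous F'.uncurry)
    (hFF' : ∀ θ x, HasDerivAt (F · x) (F' θ x) θ) (θ₀ : ℝ) :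
    HasDerivAt (fun θ => ∫ x, F θ x ∂σ) (∫ x, F' θ₀ x ∂σ) θ₀ := by
  obtain ⟨C, hC⟩ := ((isCompact_closedBall θ₀ 1).prod hK).exists_bound_of_continuousOn
    hF'.continuousOn
  have hF_cont : ∀ θ, Continuous (F θ) := fun θ => hF.comp (Continuous.prodMk_right θ)
  have hF'_cont : Continuous (F' θ₀) := hF'.comp (Continuous.prodMk_right θ₀)
  refine (hasDerivAt_integral_of_dominated_loc_of_deriv_le (bound := fun _ => C)
    (Metric.ball_mem_nhds θ₀ one_pos)
    (Eventually.of_forall fun θ => (hF_cont θ).aestronglyMeasurable)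
    ((hF_cont θ₀).integrable_of_ae_mem_compact hK hσK) hF'_cont.aestronglyMeasurable ?_
    (integrable_const C) (Eventually.of_forall fun x θ _ => hFF' θ x)).2
  filter_upwards [hσK] with x hx θ hθ
  exact hC (θ, x) ⟨Metric.ball_subset_closedBall hθ, hx⟩

end Compact

theorem norm_le_one_of_sum_norm_sq_eq_one {ι : Type*} [Fintype ι] {ζ : ι → ℂ}
    (h : ∑ j, ‖ζ j‖ ^ 2 = 1) : ‖ζ‖ ≤ 1 := by
  refine (pi_norm_le_iff_of_nonneg zero_le_one).mpr fun i => ?_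
  have : ‖ζ i‖ ^ 2 ≤ 1 := h ▸ Finset.single_le_sum (fun j _ => sq_nonneg ‖ζ j‖) (Finset.mem_univ i)
  nlinarith [norm_nonneg (ζ i)]

theorem ae_mem_closedBall_of_ae_sum_norm_sq_eq_one {ι : Type*} [Fintype ι] {σ : Measure (ι → ℂ)}
    (hsph : ∀ᵐ ζ ∂σ, ∑ j, ‖ζ j‖ ^ 2 = 1) : ∀ᵐ ζ ∂σ, ζ ∈ Metric.closedBall (0 : ι → ℂ) 1 :=
  hsph.mono fun _ h => mem_closedBall_zero_iff.mpr (norm_le_one_of_sum_norm_sq_eq_one h)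

def rot (θ : ℝ) : Matrix (Fin 2) (Fin 2) ℂ :=
  !![(Real.cos θ : ℂ), Real.sin θ; -Real.sin θ, Real.cos θ]

theorem rot_zero : rot 0 = 1 := by
  ext i j
  fin_cases i <;> fin_cases j <;> simp [rot]

theorem rot_mem_unitaryGroup (θ : ℝ) : rot θ ∈ Matrix.unitaryGroup (Fin 2) ℂ := by
  have h : (Real.cos θ : ℂ) ^ 2 + (Real.sin θ : ℂ) ^ 2 = 1 := by
    exact_mod_cast Real.cos_sq_add_sin_sq θ
  rw [Matrix.mem_unitaryGroup_iff]
  ext i j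
  fin_cases i <;> fin_cases j <;>
    simp [rot, Matrix.mul_apply, Fin.sum_univ_two, -Complex.ofReal_cos, -Complex.ofReal_sin] <;>
    first | linear_combination h | ring

theorem rot_mulVec_zero (θ : ℝ) (ζ : Fin 2 → ℂ) :
    (rot θ *ᵥ ζ) 0 = Real.cos θ * ζ 0 + Real.sin θ * ζ 1 := by
  simp [rot, Matrix.mulVec, dotProduct, Fin.sum_univ_two]

theorem rot_mulVec_one (θ : ℝ) (ζ : Fin 2 → ℂ) :
    (rot θ *ᵥ ζ) 1 = -Real.sin θ * ζ 0 + Real.cos θ * ζ 1 := by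
  simp [rot, Matrix.mulVec, dotProduct, Fin.sum_univ_two]

theorem hasDerivAt_rot_mulVec_zero (θ : ℝ) (ζ : Fin 2 → ℂ) :
    HasDerivAt (fun θ => (rot θ *ᵥ ζ) 0) ((rot θ *ᵥ ζ) 1) θ := by
  simp only [rot_mulVec_zero, rot_mulVec_one]
  refine (((Real.hasDerivAt_cos θ).ofReal_comp.mul_const (ζ 0)).fun_add
    ((Real.hasDerivAt_sin θ).ofReal_comp.mul_const (ζ 1))).congr_deriv ?_
  push_cast
  ring

theorem hasDerivAt_rot_mulVec_one (θ : ℝ) (ζ : Fin 2 → ℂ) :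
    HasDerivAt (fun θ => (rot θ *ᵥ ζ) 1) (-(rot θ *ᵥ ζ) 0) θ := by
  simp only [rot_mulVec_zero, rot_mulVec_one]
  refine (((Real.hasDerivAt_sin θ).ofReal_comp.fun_neg.mul_const (ζ 0)).fun_add
    ((Real.hasDerivAt_cos θ).ofReal_comp.mul_const (ζ 1))).congr_deriv ?_
  push_cast
  ring

theorem HasDerivAt.pow_mul_conj_pow_mul_conj {a b : ℝ → ℂ} {θ : ℝ} (ha : HasDerivAt a (b θ) θ)
    (hb : HasDerivAt b (-a θ) θ) (n : ℕ) :
    HasDerivAt (fun θ => a θ ^ (n + 1) * conj (a θ) ^ n * conj (b θ))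
      ((((n + 1) * ((‖a θ‖ ^ 2) ^ n * ‖b θ‖ ^ 2) - (‖a θ‖ ^ 2) ^ (n + 1) : ℝ) : ℂ)
        + n * (a θ ^ (n + 1) * conj (a θ ^ (n - 1) * b θ ^ 2))) θ := by
  have hca : HasDerivAt (fun θ => conj (a θ)) (conj (b θ)) θ := ha.star
  have hcb : HasDerivAt (fun θ => conj (b θ)) (-conj (a θ)) θ := by
    simpa using hb.star
  refine (((ha.fun_pow (n + 1)).fun_mul (hca.fun_pow n)).fun_mul hcb).congr_deriv ?_
  push_cast
  simp only [← Complex.mul_conj', map_mul, map_pow]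
  rcases n with _ | n
  · push_cast
    ring
  · simp only [Nat.add_sub_cancel]
    push_cast
    ring

theorem MeasureTheory.Measure.ext_of_integral_pow_eq {a b : ℝ} {ν₁ ν₂ : Measure ℝ}
    [IsFiniteMeasure ν₁] [IsFiniteMeasure ν₂] (h₁ : ∀ᵐ t ∂ν₁, t ∈ Set.Icc a b)
    (h₂ : ∀ᵐ t ∂ν₂, t ∈ Set.Icc a b) (h : ∀ n : ℕ, ∫ t, t ^ n ∂ν₁ = ∫ t, t ^ n ∂ν₂) :
    ν₁ = ν₂ := by
  have hint : ∀ {ν : Measure ℝ} [IsFiniteMeasure ν], (∀ᵐ t ∂ν, t ∈ Set.Icc a b) →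
      ∀ {f : ℝ → ℝ}, Continuous f → Integrable f ν :=
    fun hν _ hf => hf.integrable_of_ae_mem_compact isCompact_Icc hν
  have hpoly (p : Polynomial ℝ) : ∫ t, p.eval t ∂ν₁ = ∫ t, p.eval t ∂ν₂ := by
    induction p using Polynomial.induction_on' with
    | add p q hp hq =>
      simp only [Polynomial.eval_add]
      rw [integral_add (hint h₁ p.continuous) (hint h₁ q.continuous),
        integral_add (hint h₂ p.continuous) (hint h₂ q.continuous), hp, hq]
    | monomial n c =>
      simp only [Polynomial.eval_monomial]
      rw [integral_const_mul, integral_const_mul, h n]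
  have happrox : ∀ {ν : Measure ℝ} [IsFiniteMeasure ν], (∀ᵐ t ∂ν, t ∈ Set.Icc a b) →
      ∀ (f : ℝ →ᵇ ℝ) (p : Polynomial ℝ) (δ : ℝ), (∀ t ∈ Set.Icc a b, |p.eval t - f t| < δ) →
      dist (∫ t, f t ∂ν) (∫ t, p.eval t ∂ν) ≤ δ * ν.real Set.univ := by
    intro ν _ hν f p δ hp
    rw [dist_eq_norm, ← integral_sub (hint hν f.continuous) (hint hν p.continuous)]
    refine norm_integral_le_of_norm_le_const ?_
    filter_upwards [hν] with t ht
    rw [Real.norm_eq_abs, abs_sub_comm]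
    exact (hp t ht).le
  refine ext_of_forall_integral_eq_of_IsFiniteMeasure fun f => eq_of_forall_dist_le fun ε hε => ?_
  set δ := ε / (ν₁.real Set.univ + ν₂.real Set.univ + 1)
  obtain ⟨p, hp⟩ := exists_polynomial_near_of_continuousOn a b f f.continuous.continuousOn δ
    (by positivity)
  calc dist (∫ t, f t ∂ν₁) (∫ t, f t ∂ν₂)
      ≤ dist (∫ t, f t ∂ν₁) (∫ t, p.eval t ∂ν₁) + dist (∫ t, f t ∂ν₂) (∫ t, p.eval t ∂ν₂) := by
        rw [hpoly, dist_comm (∫ t, f t ∂ν₂)]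
        exact dist_triangle _ _ _
    _ ≤ δ * ν₁.real Set.univ + δ * ν₂.real Set.univ :=
        add_le_add (happrox h₁ f p δ hp) (happrox h₂ f p δ hp)
    _ ≤ ε := by
        have h₁ : 0 ≤ ν₁.real Set.univ := measureReal_nonneg
        have h₂ : 0 ≤ ν₂.real Set.univ := measureReal_nonneg
        rw [← mul_add, div_mul_eq_mul_div, div_le_iff₀ (by positivity)]
        nlinarith

theorem ae_norm_sq_one_eq_one_sub {σ : Measure (Fin 2 → ℂ)} (hsph : ∀ᵐ ζ ∂σ, ∑ j, ‖ζ j‖ ^ 2 = 1) :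
    ∀ᵐ ζ ∂σ, ‖ζ 1‖ ^ 2 = 1 - ‖ζ 0‖ ^ 2 :=
  hsph.mono fun ζ h => by rw [Fin.sum_univ_two] at h; linarith

section Sphere

variable {σ : Measure (Fin 2 → ℂ)} [IsProbabilityMeasure σ]

theorem integrable_of_ae_sum_norm_sq_eq_one (hsph : ∀ᵐ ζ ∂σ, ∑ j, ‖ζ j‖ ^ 2 = 1) {E : Type*}
    [NormedAddCommGroup E] {f : (Fin 2 → ℂ) → E} (hf : Continuous f) : Integrable f σ :=
  hf.integrable_of_ae_mem_compact (isCompact_closedBall 0 1)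
    (ae_mem_closedBall_of_ae_sum_norm_sq_eq_one hsph)

theorem integral_rot_deriv_eq_zero (hsph : ∀ᵐ ζ ∂σ, ∑ j, ‖ζ j‖ ^ 2 = 1)
    (hσ : IsUnitarilyInvariant σ) (n : ℕ) :
    ∫ ζ, ((((n + 1) * ((‖ζ 0‖ ^ 2) ^ n * ‖ζ 1‖ ^ 2) - (‖ζ 0‖ ^ 2) ^ (n + 1) : ℝ) : ℂ)
        + n * (ζ 0 ^ (n + 1) * conj (ζ 0 ^ (n - 1) * ζ 1 ^ 2))) ∂σ = 0 := by
  set g : (Fin 2 → ℂ) → ℂ := fun ζ => ζ 0 ^ (n + 1) * conj (ζ 0) ^ n * conj (ζ 1)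
  have hd := hasDerivAt_integral_of_ae_mem_compact (isCompact_closedBall 0 1)
    (ae_mem_closedBall_of_ae_sum_norm_sq_eq_one hsph) (F := fun θ ζ => g (rot θ *ᵥ ζ))
    (by simp only [g, rot_mulVec_zero, rot_mulVec_one]; fun_prop)
    (by simp only [rot_mulVec_zero, rot_mulVec_one]; fun_prop)
    (fun θ ζ => (hasDerivAt_rot_mulVec_zero θ ζ).pow_mul_conj_pow_mul_conj
      (hasDerivAt_rot_mulVec_one θ ζ) n) 0
  have hconst : (fun θ => ∫ ζ, g (rot θ *ᵥ ζ) ∂σ) = fun _ => ∫ ζ, g ζ ∂σ :=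
    funext fun θ => hσ.integral_comp ⟨rot θ, rot_mem_unitaryGroup θ⟩
      (by fun_prop : Continuous g).aestronglyMeasurable
  rw [hconst] at hd
  simpa [rot_zero] using ((hasDerivAt_const (0 : ℝ) (∫ ζ, g ζ ∂σ)).unique hd).symm

theorem succ_mul_integral_norm_sq_pow_mul_norm_sq (hsph : ∀ᵐ ζ ∂σ, ∑ j, ‖ζ j‖ ^ 2 = 1)
    (hσ : IsUnitarilyInvariant σ) (n : ℕ) :
    (n + 1) * ∫ ζ, (‖ζ 0‖ ^ 2) ^ n * ‖ζ 1‖ ^ 2 ∂σ = ∫ ζ, (‖ζ 0‖ ^ 2) ^ (n + 1) ∂σ := by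
  have hoff : ∫ ζ, ζ 0 ^ (n + 1) * conj (ζ 0 ^ (n - 1) * ζ 1 ^ 2) ∂σ = 0 := by
    have hne : ![n + 1, 0] ≠ ![n - 1, 2] := fun h => by simpa using congrFun h 1
    simpa [Fin.prod_univ_two] using
      integral_monomial_mul_conj_monomial_eq_zero (fun _ => hσ.map_mul_eq) hne
  have h := integral_rot_deriv_eq_zero hsph hσ n
  rw [integral_add (integrable_of_ae_sum_norm_sq_eq_one hsph (by fun_prop))
      (integrable_of_ae_sum_norm_sq_eq_one hsph (by fun_prop)),
    integral_const_mul, hoff, mul_zero, add_zero, integral_complex_ofReal, Complex.ofReal_eq_zero,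
    integral_sub (integrable_of_ae_sum_norm_sq_eq_one hsph (by fun_prop))
      (integrable_of_ae_sum_norm_sq_eq_one hsph (by fun_prop)),
    integral_const_mul, sub_eq_zero] at h
  exact h

theorem integral_norm_sq_pow (hsph : ∀ᵐ ζ ∂σ, ∑ j, ‖ζ j‖ ^ 2 = 1) (hσ : IsUnitarilyInvariant σ)
    (n : ℕ) : ∫ ζ, (‖ζ 0‖ ^ 2) ^ n ∂σ = 1 / (n + 1) := by
  induction n with
  | zero => simp
  | succ n ih =>
    have h := succ_mul_integral_norm_sq_pow_mul_norm_sq hsph hσ n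
    have hy : ∫ ζ, (‖ζ 0‖ ^ 2) ^ n * ‖ζ 1‖ ^ 2 ∂σ
        = ∫ ζ, (‖ζ 0‖ ^ 2) ^ n ∂σ - ∫ ζ, (‖ζ 0‖ ^ 2) ^ (n + 1) ∂σ := by
      rw [← integral_sub (integrable_of_ae_sum_norm_sq_eq_one hsph (by fun_prop))
        (integrable_of_ae_sum_norm_sq_eq_one hsph (by fun_prop))]
      refine integral_congr_ae ((ae_norm_sq_one_eq_one_sub hsph).mono fun ζ hζ => ?_)
      simp only [hζ, pow_succ]
      ring
    rw [hy, ih] at h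
    push_cast
    field_simp at h ⊢
    linarith

theorem map_norm_sq_eq_volume_restrict (hsph : ∀ᵐ ζ ∂σ, ∑ j, ‖ζ j‖ ^ 2 = 1)
    (hσ : IsUnitarilyInvariant σ) :
    σ.map (fun ζ => ‖ζ 0‖ ^ 2) = volume.restrict (Set.Icc 0 1) := by
  have hmeas : Measurable fun ζ : Fin 2 → ℂ => ‖ζ 0‖ ^ 2 := by fun_prop
  have : IsFiniteMeasure (volume.restrict (Set.Icc (0 : ℝ) 1)) :=
    isFiniteMeasure_restrict.mpr measure_Icc_lt_top.ne
  refine Measure.ext_of_integral_pow_eq (a := 0) (b := 1) ?_ (ae_restrict_mem measurableSet_Icc)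
    fun n => ?_
  · refine (ae_map_iff hmeas.aemeasurable (p := fun t => t ∈ Set.Icc 0 1) measurableSet_Icc).mpr ?_
    filter_upwards [ae_norm_sq_one_eq_one_sub hsph] with ζ hζ
    exact ⟨by positivity, by nlinarith [sq_nonneg ‖ζ 1‖]⟩
  · rw [integral_map hmeas.aemeasurable (by fun_prop), integral_norm_sq_pow hsph hσ,
      integral_Icc_eq_integral_Ioc, ← intervalIntegral.integral_of_le zero_le_one, integral_pow]
    simp

theorem integral_log_two_mul_norm_sq (hsph : ∀ᵐ ζ ∂σ, ∑ j, ‖ζ j‖ ^ 2 = 1)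
    (hσ : IsUnitarilyInvariant σ) : ∫ ζ, Real.log (2 * ‖ζ 0‖ ^ 2) ∂σ = Real.log 2 - 1 := by
  have hmeas : Measurable fun ζ : Fin 2 → ℂ => ‖ζ 0‖ ^ 2 := by fun_prop
  rw [← integral_map (f := fun t => Real.log (2 * t)) hmeas.aemeasurable
      (by fun_prop : Measurable fun t : ℝ => Real.log (2 * t)).aestronglyMeasurable,
    map_norm_sq_eq_volume_restrict hsph hσ, integral_Icc_eq_integral_Ioc,
    ← intervalIntegral.integral_of_le zero_le_one,
    intervalIntegral.integral_comp_mul_left (fun t => Real.log t) two_ne_zero, integral_log]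
  simp
  ring

theorem integral_norm_sq_pow_mul_norm_sq_pow_pos (hsph : ∀ᵐ ζ ∂σ, ∑ j, ‖ζ j‖ ^ 2 = 1)
    (hσ : IsUnitarilyInvariant σ) (p q : ℕ) :
    0 < ∫ ζ, (‖ζ 0‖ ^ 2) ^ p * (‖ζ 1‖ ^ 2) ^ q ∂σ := by
  have hmeas : Measurable fun ζ : Fin 2 → ℂ => ‖ζ 0‖ ^ 2 := by fun_prop
  rw [integral_congr_ae ((ae_norm_sq_one_eq_one_sub hsph).mono fun ζ hζ => by rw [hζ]),
    ← integral_map (f := fun t => t ^ p * (1 - t) ^ q) hmeas.aemeasurable (by fun_prop),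
    map_norm_sq_eq_volume_restrict hsph hσ, integral_Icc_eq_integral_Ioc,
    ← intervalIntegral.integral_of_le zero_le_one]
  refine intervalIntegral.intervalIntegral_pos_of_pos_on
    ((by fun_prop : Continuous fun t : ℝ => t ^ p * (1 - t) ^ q).intervalIntegrable 0 1)
    (fun t ht => ?_) zero_lt_one
  have : 0 < 1 - t := by linarith [ht.2]
  have := ht.1
  positivity

end Sphere

theorem integral_monomial_mul_conj_withDensity (σ : Measure (Fin 2 → ℂ)) (α β : Fin 2 →₀ ℕ) :
    ∫ ζ, (∏ j, ζ j ^ α j) * conj (∏ j, ζ j ^ β j)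
        ∂σ.withDensity (fun ζ => ENNReal.ofReal (2 * ‖ζ 0‖ ^ 2))
      = 2 * ∫ ζ, (∏ j, ζ j ^ (α + Finsupp.single 0 1 : Fin 2 →₀ ℕ) j)
          * conj (∏ j, ζ j ^ (β + Finsupp.single 0 1 : Fin 2 →₀ ℕ) j) ∂σ := by
  rw [integral_withDensity_eq_integral_toReal_smul (by fun_prop)
    (ae_of_all _ fun _ => ENNReal.ofReal_lt_top), ← integral_const_mul]
  congr 1
  funext ζ
  rw [ENNReal.toReal_ofReal (by positivity), Complex.real_smul]
  simp only [Fin.prod_univ_two, Finsupp.coe_add, Pi.add_apply, Finsupp.single_eq_same,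
    Finsupp.single_eq_of_ne (show (1 : Fin 2) ≠ 0 by decide), add_zero, map_mul, map_pow]
  push_cast
  rw [← Complex.mul_conj']
  ring

theorem monomial_mul_conj_self (γ : Fin 2 →₀ ℕ) (ζ : Fin 2 → ℂ) :
    (∏ j, ζ j ^ γ j) * conj (∏ j, ζ j ^ γ j)
      = (((‖ζ 0‖ ^ 2) ^ γ 0 * (‖ζ 1‖ ^ 2) ^ γ 1 : ℝ) : ℂ) := by
  rw [Complex.mul_conj', Fin.prod_univ_two, norm_mul, norm_pow, norm_pow]
  push_cast
  ring

theorem Finset.eq_one_of_prod_eq_one_of_le_one {ι : Type*} {s : Finset ι} {f : ι → ℝ}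
    (h₀ : ∀ i ∈ s, 0 ≤ f i) (h₁ : ∀ i ∈ s, f i ≤ 1) (h : ∏ i ∈ s, f i = 1) {i : ι}
    (hi : i ∈ s) : f i = 1 := by
  classical
  have hrest₀ : 0 ≤ ∏ j ∈ s.erase i, f j :=
    Finset.prod_nonneg fun j hj => h₀ j (Finset.mem_of_mem_erase hj)
  have hrest₁ : ∏ j ∈ s.erase i, f j ≤ 1 :=
    Finset.prod_le_one (fun j hj => h₀ j (Finset.mem_of_mem_erase hj))
      fun j hj => h₁ j (Finset.mem_of_mem_erase hj)
  have hsplit := Finset.mul_prod_erase s f hi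
  nlinarith [h₀ i hi, h₁ i hi]

theorem Matrix.IsDiag.det_eq_prod_diag {n R : Type*} [Fintype n] [DecidableEq n] [CommRing R]
    {A : Matrix n n R} (hA : A.IsDiag) : A.det = ∏ i, A i i := by
  conv_lhs => rw [← hA.diagonal_diag]
  exact Matrix.det_diagonal

theorem eq_zero_of_det_eq_mul_prod_one_sub_norm_sq {k : ℕ → ℕ → ℂ}
    (hoff : ∀ i j, i ≠ j → k i j = 0) (hdiag : ∀ i, k i i ≠ 0) {γ : ℕ → ℂ}
    (hγ : ∀ i, ‖γ i‖ ≤ 1) {n : ℕ}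
    (hdet : Matrix.det (Matrix.of fun i j : Fin (n + 2) => k i j)
      = k (n + 1) (n + 1) * ((∏ i ∈ Finset.range (n + 1), (1 - ‖γ i‖ ^ 2) : ℝ) : ℂ)
        * Matrix.det (Matrix.of fun i j : Fin (n + 1) => k i j)) :
    ∀ i ≤ n, γ i = 0 := by
  have hdet_diag (N : ℕ) : Matrix.det (Matrix.of fun i j : Fin N => k i j) = ∏ i : Fin N, k i i :=
    Matrix.IsDiag.det_eq_prod_diag fun i j hij => hoff i j (Fin.val_injective.ne hij)
  rw [hdet_diag, hdet_diag, Fin.prod_univ_castSucc] at hdet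
  have hD : ∏ i : Fin (n + 1), k i i ≠ 0 := Finset.prod_ne_zero_iff.mpr fun i _ => hdiag i
  have hprod : ∏ i ∈ Finset.range (n + 1), (1 - ‖γ i‖ ^ 2) = 1 := by
    have h : k (n + 1) (n + 1) * ((∏ i ∈ Finset.range (n + 1), (1 - ‖γ i‖ ^ 2) : ℝ) : ℂ)
        * ∏ i : Fin (n + 1), k i i = k (n + 1) (n + 1) * 1 * ∏ i : Fin (n + 1), k i i := by
      rw [← hdet]
      simp only [Fin.val_castSucc, Fin.val_last]
      ring
    exact_mod_cast mul_left_cancel₀ (hdiag _) (mul_right_cancel₀ hD h)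
  intro i hi
  have h1 := Finset.eq_one_of_prod_eq_one_of_le_one (f := fun j => 1 - ‖γ j‖ ^ 2)
    (fun j _ => by nlinarith [hγ j, norm_nonneg (γ j)])
    (fun j _ => by nlinarith [norm_nonneg (γ j)])
    hprod (Finset.mem_range_succ_iff.mpr hi)
  simpa using h1

theorem stmt19_general (σ' : Measure (Fin 2 → ℂ)) [IsProbabilityMeasure σ']
    (hsph : ∀ᵐ ζ ∂σ', ∑ j, ‖ζ j‖ ^ 2 = 1)
    (hrot : ∀ U : Matrix.unitaryGroup (Fin 2) ℂ,
      Measure.map (fun ζ => Matrix.mulVec (U : Matrix (Fin 2) (Fin 2) ℂ) ζ) σ' = σ')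
    (μ : Measure (Fin 2 → ℂ))
    (hμ : μ = σ'.withDensity fun ζ => ENNReal.ofReal (2 * ‖ζ 0‖ ^ 2))
    (K : (Fin 2 →₀ ℕ) → (Fin 2 →₀ ℕ) → ℂ)
    (hK : ∀ α β, K α β = ∫ ζ, (∏ j, ζ j ^ α j) * (starRingEnd ℂ) (∏ j, ζ j ^ β j) ∂μ)
    -- shortlex enumeration of the multi-indices
    (e : ℕ ≃ (Fin 2 →₀ ℕ))
    -- Verblunsky coefficients `γ i n = γ_{β,α}` for `β, α` in shortlex positions `i, n`
    (γ : ℕ → ℕ → ℂ) (hγbd : ∀ i n, ‖γ i n‖ ≤ 1) (hγ00 : γ 0 0 = 0)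
    (hdet : ∀ n : ℕ,
      Matrix.det (Matrix.of fun i j : Fin (n + 2) => K (e (i : ℕ)) (e (j : ℕ)))
        = K (e (n + 1)) (e (n + 1))
          * (((∏ i ∈ Finset.range (n + 1), (1 - ‖γ i (n + 1)‖ ^ 2) : ℝ)) : ℂ)
          * Matrix.det (Matrix.of fun i j : Fin (n + 1) => K (e (i : ℕ)) (e (j : ℕ)))) :
    (∀ α β, α ≠ β → K α β = 0) ∧
    (∀ n i : ℕ, i ≤ n → γ i (n + 1) = 0) ∧
    Tendsto (fun N : ℕ => ∏ k ∈ Finset.range (N + 1), (1 - ‖γ 0 k‖ ^ 2)) atTop (nhds 1) ∧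
    Real.exp (∫ ζ, Real.log (2 * ‖ζ 0‖ ^ 2) ∂σ') = 2 / Real.exp 1 ∧
    (1 : ℝ) ≠ 2 / Real.exp 1 := by
  have hσ : IsUnitarilyInvariant σ' := hrot
  have hK' (α β) := (hK α β).trans (hμ ▸ integral_monomial_mul_conj_withDensity σ' α β)
  have hoff : ∀ α β, α ≠ β → K α β = 0 := fun α β hne => by
    rw [hK', integral_monomial_mul_conj_monomial_eq_zero (fun _ => hσ.map_mul_eq)
      fun h => hne (add_right_cancel (DFunLike.coe_injective h)), mul_zero]
  have hdiag (α) : K α α ≠ 0 := by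
    rw [hK']
    simp only [monomial_mul_conj_self, integral_complex_ofReal]
    exact mul_ne_zero two_ne_zero (Complex.ofReal_ne_zero.mpr
      (integral_norm_sq_pow_mul_norm_sq_pow_pos hsph hσ _ _).ne')
  have hγ (n : ℕ) : ∀ i ≤ n, γ i (n + 1) = 0 :=
    eq_zero_of_det_eq_mul_prod_one_sub_norm_sq (k := fun i j => K (e i) (e j))
      (fun i j hij => hoff _ _ (e.injective.ne hij)) (fun _ => hdiag _) (fun i => hγbd i _)
      (hdet n)
  refine ⟨hoff, hγ, tendsto_const_nhds.congr fun N => ?_, ?_, ?_⟩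
  · refine (Finset.prod_eq_one fun k _ => ?_).symm
    rcases k with _ | k
    · simp [hγ00]
    · simp [hγ k 0 k.zero_le]
  · rw [integral_log_two_mul_norm_sq hsph hσ, Real.exp_sub, Real.exp_log two_pos]
  · have := Real.exp_one_gt_d9
    rw [ne_eq, eq_div_iff (Real.exp_pos 1).ne']
    linarith

/-- failure of the Szegő–Verblunsky identity on `∂B²`. For the probability
measure `dμ = 2|ζ₁|² dσ` on the unit sphere in `ℂ²`, the moment kernel `K` is diagonal,
all Verblunsky coefficients `γ_{β,α}` (characterised by the moment-determinant identity
`D_α = K(α,α) · ∏_{β ⪯ prec α}(1-|γ_{β,α}|²) · D_{prec α}` with `|γ_{β,α}| ≤ 1`) vanish,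
hence `∏_α (1-|γ_{0,α}|²) = 1`, whereas `exp(∫ log(2|ζ₁|²) dσ) = 2/e ≠ 1`. -/
theorem stmt19 (σ' : Measure (Fin 2 → ℂ)) [IsProbabilityMeasure σ']
    (hsph : ∀ᵐ ζ ∂σ', ∑ j, ‖ζ j‖ ^ 2 = 1)
    (hrot : ∀ U : Matrix.unitaryGroup (Fin 2) ℂ,
      Measure.map (fun ζ => Matrix.mulVec (U : Matrix (Fin 2) (Fin 2) ℂ) ζ) σ' = σ')
    (μ : Measure (Fin 2 → ℂ))
    (hμ : μ = σ'.withDensity fun ζ => ENNReal.ofReal (2 * ‖ζ 0‖ ^ 2))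
    (K : (Fin 2 →₀ ℕ) → (Fin 2 →₀ ℕ) → ℂ)
    (hK : ∀ α β, K α β = ∫ ζ, (∏ j, ζ j ^ α j) * (starRingEnd ℂ) (∏ j, ζ j ^ β j) ∂μ)
    -- shortlex enumeration of the multi-indices
    (e : ℕ ≃ (Fin 2 →₀ ℕ)) (hmono : ∀ n m : ℕ, n < m → slexLT (e n) (e m))
    -- Verblunsky coefficients `γ i n = γ_{β,α}` for `β, α` in shortlex positions `i, n`
    (γ : ℕ → ℕ → ℂ) (hγbd : ∀ i n, ‖γ i n‖ ≤ 1) (hγ00 : γ 0 0 = 0)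
    (hdet : ∀ n : ℕ,
      Matrix.det (Matrix.of fun i j : Fin (n + 2) => K (e (i : ℕ)) (e (j : ℕ)))
        = K (e (n + 1)) (e (n + 1))
          * (((∏ i ∈ Finset.range (n + 1), (1 - ‖γ i (n + 1)‖ ^ 2) : ℝ)) : ℂ)
          * Matrix.det (Matrix.of fun i j : Fin (n + 1) => K (e (i : ℕ)) (e (j : ℕ)))) :
    (∀ α β, α ≠ β → K α β = 0) ∧
    (∀ n i : ℕ, i ≤ n → γ i (n + 1) = 0) ∧
    Tendsto (fun N : ℕ => ∏ k ∈ Finset.range (N + 1), (1 - ‖γ 0 k‖ ^ 2)) atTop (nhds 1) ∧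
    Real.exp (∫ ζ, Real.log (2 * ‖ζ 0‖ ^ 2) ∂σ') = 2 / Real.exp 1 ∧
    (1 : ℝ) ≠ 2 / Real.exp 1 :=
  stmt19_general σ' hsph hrot μ hμ K hK e γ hγbd hγ00 hdet
end
end
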